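/- For any two probability measures P and Q on the same measurable space, TV(P, Q) ≤ √(min{ (1/2)·D_KL(P‖Q), 1 − exp(−D_KL(P‖Q)) }). -/

import Mathlib

open MeasureTheory Real Classical ENNReal

/-- The Kullback–Leibler divergence `D_KL(P‖Q)`, taken to be `+∞` if absolute continuity
(or integrability of the log-likelihood ratio) fails. -/
noncomputable def klDiv {Θ : Type*} [MeasurableSpace Θ] (P Q : Measure Θ) : ℝ≥0∞ :=
  if P ≪ Q ∧ Integrable (fun θ => Real.log (P.rnDeriv Q θ).toReal) P then
    ENNReal.ofReal (∫ θ, Real.log (P.rnDeriv Q θ).toReal ∂P)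
  else ⊤

/-- The total variation distance `TV(P, Q) = sup_E |P(E) − Q(E)|`. -/
noncomputable def tvDist {Θ : Type*} [MeasurableSpace Θ] (P Q : Measure Θ) : ℝ :=
  sSup {r : ℝ | ∃ E : Set Θ, MeasurableSet E ∧ r = |(P E).toReal - (Q E).toReal|}

/-!
Write `f = dP/dQ`, so that `|P(E) - Q(E)| ≤ t/2` with `t = ∫ |f - 1| dQ`, and
`D_KL(P‖Q) = ∫ φ(f) dQ` with `φ(x) = klFun x = x log x - x + 1`.

Pinsker: `φ(x) ≥ 3 (x - 1)² / (2x + 4)`, so by AM-GM `c |x - 1| ≤ c² (x + 2) / 6 + φ(x)` for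
every `c`; integrating and taking `c = t` gives `t² ≤ 2 D_KL`.

Bretagnolle–Huber: Jensen's inequality for `exp` under `P` gives `exp(-D_KL / 2) ≤ ∫ √f dQ`,
and `√f = √(min(f, 1) · max(f, 1))` with Cauchy–Schwarz (again AM-GM with an optimised
parameter) gives `(∫ √f dQ)² ≤ (1 - t/2)(1 + t/2)`.
-/

open Set
open InformationTheory (klFun)

lemma monotoneOn_add_one_mul_log_sub :
    MonotoneOn (fun x => (x + 1) * Real.log x - 2 * (x - 1)) (Ioi 0) := by
  have hderiv (x : ℝ) (hx : 0 < x) : HasDerivAt (fun x => (x + 1) * Real.log x - 2 * (x - 1))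
      (Real.log x + x⁻¹ - 1) x :=
    (((hasDerivAt_id' x).add_const 1).mul (hasDerivAt_log hx.ne')).sub
      (((hasDerivAt_id' x).sub_const 1).const_mul 2) |>.congr_deriv (by field_simp; ring)
  refine monotoneOn_of_hasDerivWithinAt_nonneg (f' := fun x => Real.log x + x⁻¹ - 1)
    (convex_Ioi 0) (fun x hx => (hderiv x hx).continuousAt.continuousWithinAt)
    (fun x hx => ?_) (fun x hx => ?_)
  all_goals rw [interior_Ioi] at hx
  · exact (hderiv x hx).hasDerivWithinAt
  · linarith [one_sub_inv_le_log_of_pos hx]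

lemma three_mul_sq_sub_one_le_klFun {x : ℝ} (hx : 0 ≤ x) :
    3 * (x - 1) ^ 2 ≤ (2 * x + 4) * klFun x := by
  set g : ℝ → ℝ := fun x => (x + 1) * Real.log x - 2 * (x - 1)
  set h : ℝ → ℝ := fun x => (2 * x + 4) * klFun x - 3 * (x - 1) ^ 2
  have hg : MonotoneOn g (Ioi 0) := monotoneOn_add_one_mul_log_sub
  have hg1 : g 1 = 0 := by simp [g]
  have hcont : Continuous h := by
    have := InformationTheory.continuous_klFun
    fun_prop
  have hderiv (y : ℝ) (hy : 0 < y) : HasDerivAt h (4 * g y) y :=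
    (((hasDerivAt_id' y).const_mul 2).add_const 4).mul
      (InformationTheory.hasDerivAt_klFun hy.ne') |>.sub
      ((((hasDerivAt_id' y).sub_const 1).pow 2).const_mul 3) |>.congr_deriv
      (by simp only [g, InformationTheory.klFun_apply]; ring)
  suffices h 1 ≤ h x by simpa [h, InformationTheory.klFun_one] using this
  rcases le_total x 1 with hx1 | hx1
  · refine antitoneOn_of_hasDerivWithinAt_nonpos (f' := fun y => 4 * g y) (convex_Icc 0 1)
      hcont.continuousOn (fun y hy => ?_) (fun y hy => ?_) ⟨hx, hx1⟩ ⟨zero_le_one, le_rfl⟩ hx1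
    all_goals rw [interior_Icc] at hy
    · exact (hderiv y hy.1).hasDerivWithinAt
    · linarith [hg hy.1 (mem_Ioi.2 one_pos) hy.2.le]
  · refine monotoneOn_of_hasDerivWithinAt_nonneg (f' := fun y => 4 * g y) (convex_Ici 1)
      hcont.continuousOn (fun y hy => ?_) (fun y hy => ?_) self_mem_Ici hx1 hx1
    all_goals rw [interior_Ici] at hy
    · exact (hderiv y (one_pos.trans hy)).hasDerivWithinAt
    · linarith [hg (mem_Ioi.2 one_pos) (mem_Ioi.2 (one_pos.trans hy)) hy.le]

lemma mul_abs_sub_one_le_klFun {x : ℝ} (hx : 0 ≤ x) (c : ℝ) :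
    c * |x - 1| ≤ c ^ 2 * (x + 2) / 6 + klFun x := by
  refine le_of_mul_le_mul_left ?_ (by linarith : 0 < x + 2)
  nlinarith [three_mul_sq_sub_one_le_klFun hx, sq_nonneg (c * (x + 2) - 3 * |x - 1|),
    sq_abs (x - 1)]

lemma four_mul_mul_sqrt_le {x : ℝ} (hx : 0 ≤ x) (a : ℝ) :
    4 * a * √x ≤ x + 1 - |x - 1| + a ^ 2 * (x + 1 + |x - 1|) := by
  have hsq := sq_sqrt hx
  rcases le_total x 1 with h | h
  · rw [abs_of_nonpos (by linarith)]
    nlinarith [sq_nonneg (√x - a)]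
  · rw [abs_of_nonneg (by linarith)]
    nlinarith [sq_nonneg (a * √x - 1)]

lemma mul_exp_neg_log_div_two {x : ℝ} (hx : 0 ≤ x) : x * exp (-Real.log x / 2) = √x := by
  rcases hx.eq_or_lt with rfl | hx
  · simp
  · rw [sqrt_eq_rpow, rpow_def_of_pos hx]
    nth_rewrite 1 [← exp_log hx]
    rw [← exp_add]
    ring_nf

lemma MeasureTheory.Integrable.sqrt {α : Type*} [MeasurableSpace α] {μ : Measure α}
    [IsFiniteMeasure μ] {f : α → ℝ} (hf : Integrable f μ) : Integrable (fun x => √(f x)) μ :=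
  Integrable.mono' (g := fun x => |f x| + 1) (hf.abs.add (integrable_const 1))
    (continuous_sqrt.comp_aestronglyMeasurable hf.1) (ae_of_all _ fun x => by
      rw [norm_of_nonneg (sqrt_nonneg _)]
      exact sqrt_le_iff.2 ⟨by positivity, by nlinarith [le_abs_self (f x), abs_nonneg (f x)]⟩)

section ProbabilityDensity

variable {α : Type*} [MeasurableSpace α] {μ : Measure α} [IsProbabilityMeasure μ] {f : α → ℝ}

lemma sq_integral_abs_sub_one_le_two_mul_integral_klFun (hf : ∀ x, 0 ≤ f x)
    (hfi : Integrable f μ) (hf1 : ∫ x, f x ∂μ = 1) (hkl : Integrable (fun x => klFun (f x)) μ) :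
    (∫ x, |f x - 1| ∂μ) ^ 2 ≤ 2 * ∫ x, klFun (f x) ∂μ := by
  set t := ∫ x, |f x - 1| ∂μ
  have hquad : Integrable (fun x => t ^ 2 * (f x + 2) / 6) μ :=
    ((hfi.add (integrable_const 2)).const_mul _).div_const 6
  have key : t * t ≤ t ^ 2 / 2 + ∫ x, klFun (f x) ∂μ :=
    calc t * t = ∫ x, t * |f x - 1| ∂μ := (integral_const_mul _ _).symm
      _ ≤ ∫ x, (t ^ 2 * (f x + 2) / 6 + klFun (f x)) ∂μ :=
        integral_mono ((hfi.sub (integrable_const 1)).abs.const_mul t) (hquad.add hkl)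
          fun x => mul_abs_sub_one_le_klFun (hf x) t
      _ = t ^ 2 / 2 + ∫ x, klFun (f x) ∂μ := by
        rw [integral_add hquad hkl, integral_div, integral_const_mul,
          integral_add hfi (integrable_const 2), hf1]
        simp only [integral_const, probReal_univ, smul_eq_mul, one_mul]
        ring
  nlinarith

lemma sq_integral_sqrt_le (hf : ∀ x, 0 ≤ f x) (hfi : Integrable f μ) (hf1 : ∫ x, f x ∂μ = 1) :
    (∫ x, √(f x) ∂μ) ^ 2 ≤ 1 - ((∫ x, |f x - 1| ∂μ) / 2) ^ 2 := by
  set b := ∫ x, √(f x) ∂μ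
  set t := ∫ x, |f x - 1| ∂μ
  have ht : 0 ≤ t := integral_nonneg fun x => abs_nonneg _
  have hf1' : Integrable (fun x => f x + 1) μ := hfi.add (integrable_const 1)
  have habs : Integrable (fun x => |f x - 1|) μ := (hfi.sub (integrable_const 1)).abs
  have hmin : Integrable (fun x => f x + 1 - |f x - 1|) μ := hf1'.sub habs
  have hmax : Integrable (fun x => f x + 1 + |f x - 1|) μ := hf1'.add habs
  set a := 2 * b / (2 + t)
  have key : 4 * a * b ≤ 2 - t + a ^ 2 * (2 + t) :=
    calc 4 * a * b = ∫ x, 4 * a * √(f x) ∂μ := (integral_const_mul _ _).symm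
      _ ≤ ∫ x, (f x + 1 - |f x - 1| + a ^ 2 * (f x + 1 + |f x - 1|)) ∂μ :=
        integral_mono (hfi.sqrt.const_mul _) (hmin.add (hmax.const_mul _))
          fun x => four_mul_mul_sqrt_le (hf x) a
      _ = 2 - t + a ^ 2 * (2 + t) := by
        rw [integral_add hmin (hmax.const_mul _), integral_const_mul, integral_sub hf1' habs,
          integral_add hf1' habs, integral_add hfi (integrable_const 1), hf1]
        simp only [integral_const, probReal_univ, smul_eq_mul, mul_one]
        ring
  have h2t : 0 < 2 + t := by linarith
  simp only [a] at key
  field_simp at key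
  nlinarith

end ProbabilityDensity

section TwoMeasures

variable {α : Type*} [MeasurableSpace α] {P Q : Measure α}

lemma two_mul_abs_setIntegral_le_integral_abs {μ : Measure α} {g : α → ℝ} (hg : Integrable g μ)
    (hg0 : ∫ x, g x ∂μ = 0) {E : Set α} (hE : MeasurableSet E) :
    2 * |∫ x in E, g x ∂μ| ≤ ∫ x, |g x| ∂μ := by
  have hcompl : ∫ x in Eᶜ, g x ∂μ = -∫ x in E, g x ∂μ := by
    linarith [integral_add_compl hE hg]
  calc 2 * |∫ x in E, g x ∂μ| = |∫ x in E, g x ∂μ| + |∫ x in Eᶜ, g x ∂μ| := by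
        rw [hcompl, abs_neg]; ring
    _ ≤ ∫ x in E, |g x| ∂μ + ∫ x in Eᶜ, |g x| ∂μ :=
        add_le_add abs_integral_le_integral_abs abs_integral_le_integral_abs
    _ = ∫ x, |g x| ∂μ := integral_add_compl hE hg.abs

variable [IsProbabilityMeasure P] [IsProbabilityMeasure Q]

lemma abs_measureReal_sub_le_integral_abs_rnDeriv_sub_one (hPQ : P ≪ Q) {E : Set α}
    (hE : MeasurableSet E) :
    |P.real E - Q.real E| ≤ (∫ x, |(P.rnDeriv Q x).toReal - 1| ∂Q) / 2 := by
  have hfi : Integrable (fun x => (P.rnDeriv Q x).toReal) Q := Measure.integrable_toReal_rnDeriv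
  have hE' : P.real E - Q.real E = ∫ x in E, ((P.rnDeriv Q x).toReal - 1) ∂Q := by
    rw [integral_sub hfi.integrableOn (integrable_const 1).integrableOn,
      Measure.setIntegral_toReal_rnDeriv hPQ E]
    simp
  have hint0 : ∫ x, ((P.rnDeriv Q x).toReal - 1) ∂Q = 0 := by
    rw [integral_sub hfi (integrable_const 1), Measure.integral_toReal_rnDeriv hPQ]
    simp
  rw [hE']
  linarith [two_mul_abs_setIntegral_le_integral_abs (g := fun x => (P.rnDeriv Q x).toReal - 1)
    (hfi.sub (integrable_const 1)) hint0 hE]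

lemma exp_neg_integral_llr_div_two_le (hPQ : P ≪ Q) (hllr : Integrable (llr P Q) P) :
    exp (-(∫ x, llr P Q x ∂P) / 2) ≤ ∫ x, √(P.rnDeriv Q x).toReal ∂Q := by
  have hsqrt (x : α) : (P.rnDeriv Q x).toReal * exp (-llr P Q x / 2) = √(P.rnDeriv Q x).toReal :=
    mul_exp_neg_log_div_two ENNReal.toReal_nonneg
  have hexp : Integrable (fun x => exp (-llr P Q x / 2)) P := by
    refine (integrable_toReal_rnDeriv_mul_iff hPQ).1 ?_
    simp_rw [hsqrt]
    exact Measure.integrable_toReal_rnDeriv.sqrt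
  calc exp (-(∫ x, llr P Q x ∂P) / 2) = exp (∫ x, -llr P Q x / 2 ∂P) := by
        rw [integral_div, integral_neg]
    _ ≤ ∫ x, exp (-llr P Q x / 2) ∂P :=
        convexOn_exp.map_integral_le continuous_exp.continuousOn isClosed_univ
          (ae_of_all _ fun _ => mem_univ _) (hllr.neg.div_const 2) hexp
    _ = ∫ x, √(P.rnDeriv Q x).toReal ∂Q := by
        rw [← integral_toReal_rnDeriv_mul hPQ]
        simp_rw [hsqrt]

lemma sq_integral_abs_rnDeriv_sub_one_le_two_mul_toReal_klDiv (hPQ : P ≪ Q)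
    (hllr : Integrable (llr P Q) P) :
    (∫ x, |(P.rnDeriv Q x).toReal - 1| ∂Q) ^ 2 ≤ 2 * (InformationTheory.klDiv P Q).toReal := by
  rw [InformationTheory.toReal_klDiv_eq_integral_klFun hPQ]
  exact sq_integral_abs_sub_one_le_two_mul_integral_klFun (fun _ => ENNReal.toReal_nonneg)
    Measure.integrable_toReal_rnDeriv (by simp [Measure.integral_toReal_rnDeriv hPQ])
    ((InformationTheory.integrable_klFun_rnDeriv_iff hPQ).2 hllr)

lemma exp_neg_toReal_klDiv_le (hPQ : P ≪ Q) (hllr : Integrable (llr P Q) P) :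
    exp (-(InformationTheory.klDiv P Q).toReal) ≤
      1 - ((∫ x, |(P.rnDeriv Q x).toReal - 1| ∂Q) / 2) ^ 2 := by
  rw [InformationTheory.toReal_klDiv_of_measure_eq hPQ (by simp)]
  calc exp (-∫ x, llr P Q x ∂P) = exp (-(∫ x, llr P Q x ∂P) / 2) ^ 2 := by
        rw [← exp_nat_mul]; ring_nf
    _ ≤ (∫ x, √(P.rnDeriv Q x).toReal ∂Q) ^ 2 := by
        gcongr
        exact exp_neg_integral_llr_div_two_le hPQ hllr
    _ ≤ _ := sq_integral_sqrt_le (fun _ => ENNReal.toReal_nonneg)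
        Measure.integrable_toReal_rnDeriv (by simp [Measure.integral_toReal_rnDeriv hPQ])

lemma klDiv_eq_informationTheory_klDiv : klDiv P Q = InformationTheory.klDiv P Q := by
  rw [klDiv, InformationTheory.klDiv_def]
  simp [llr_def]

end TwoMeasures

lemma tvDist_le {α : Type*} [MeasurableSpace α] {P Q : Measure α} {c : ℝ} (hc : 0 ≤ c)
    (h : ∀ E, MeasurableSet E → |P.real E - Q.real E| ≤ c) : tvDist P Q ≤ c :=
  Real.sSup_le (by rintro r ⟨E, hE, rfl⟩; exact h E hE) hc

/-- Pinsker's inequality combined with the Bretagnolle–Huber inequality: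
`TV(P, Q) ≤ √(min{(1/2)·D_KL(P‖Q), 1 − exp(−D_KL(P‖Q))})`
(when `D_KL(P‖Q) = +∞`, the right-hand side equals `1`). -/
theorem tv_le_sqrt_min_pinsker_bretagnolleHuber
    {Θ : Type*} [MeasurableSpace Θ] (P Q : Measure Θ)
    [IsProbabilityMeasure P] [IsProbabilityMeasure Q] :
    tvDist P Q ≤
      if klDiv P Q = ⊤ then 1
      else Real.sqrt (min ((klDiv P Q).toReal / 2)
        (1 - Real.exp (-(klDiv P Q).toReal))) := by
  rw [klDiv_eq_informationTheory_klDiv]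
  split_ifs with htop
  · exact tvDist_le zero_le_one fun E _ => abs_sub_le_of_nonneg_of_le measureReal_nonneg
      measureReal_le_one measureReal_nonneg measureReal_le_one
  obtain ⟨hPQ, hllr⟩ := InformationTheory.klDiv_ne_top_iff.1 htop
  have pinsker := sq_integral_abs_rnDeriv_sub_one_le_two_mul_toReal_klDiv hPQ hllr
  have bretagnolleHuber := exp_neg_toReal_klDiv_le hPQ hllr
  refine tvDist_le (sqrt_nonneg _) fun E hE =>
    (abs_measureReal_sub_le_integral_abs_rnDeriv_sub_one hPQ hE).trans (le_sqrt_of_sq_le ?_)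
  exact le_min (by linarith) (by linarith)
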